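/- arXiv:2308.10887 — 2 statements merged into one kernel-verified Lean document; each statement's English description precedes it below -/
import Mathlib

section
/- There is a constant C depending only on the dimension d such that for every cube Q = Q(c,ℓ) in R^d, the average log_Q of the function x ↦ log|x| over Q satisfies |log_Q − log(max(|c|, ℓ))| ≤ C. -/
open MeasureTheory Filter Set

noncomputable section

namespace TL

/-- Euclidean space `ℝ^d`. -/
abbrev Rd (d : ℕ) := EuclideanSpace ℝ (Fin d)

variable {d : ℕ}

/-- An axis-parallel cube in `ℝ^d` with center `c` and side length `len > 0`. -/
structure Cube (d : ℕ) where
  c : Rd d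
  len : ℝ
  len_pos : 0 < len

namespace Cube

/-- The set of points of the cube. -/
def set (Q : Cube d) : Set (Rd d) := {x | ∀ i, |x i - Q.c i| < Q.len / 2}

/-- The volume `ℓ^d` of a cube. -/
def vol (Q : Cube d) : ℝ := Q.len ^ d

/-- The cube dilated `α` times with respect to its center. -/
def dilate (Q : Cube d) (α : ℝ) (hα : 0 < α) : Cube d :=
  ⟨Q.c, α * Q.len, mul_pos hα Q.len_pos⟩

/-- The cube `2Q`. -/
def double (Q : Cube d) : Cube d := Q.dilate 2 two_pos

end Cube

/-- The average `f_Q` of `f` over the cube `Q`. -/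
def avg (Q : Cube d) (f : Rd d → ℝ) : ℝ := (Q.vol)⁻¹ * ∫ x in Q.set, f x

/-- The mean oscillation `‖f‖_Q = inf_b |Q|⁻¹ ∫_Q |f-b|`. -/
def osc (Q : Cube d) (f : Rd d → ℝ) : ℝ :=
  ⨅ b : ℝ, (Q.vol)⁻¹ * ∫ x in Q.set, |f x - b|

/-- The fixed unit cube `Q₀` centered at the origin. -/
def Q0 (d : ℕ) : Cube d := ⟨0, 1, one_pos⟩

/-- The `BMO` seminorm `sup_Q ‖f‖_Q`. -/
def bmoSeminorm (f : Rd d → ℝ) : ℝ := ⨆ Q : Cube d, osc Q f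

/-- Membership in `BMO(ℝ^d)`: local integrability together with finiteness of the seminorm. -/
def MemBMO (f : Rd d → ℝ) : Prop :=
  LocallyIntegrable f volume ∧ BddAbove (Set.range fun Q : Cube d => osc Q f)

/-- The `BMO` norm `‖f‖*_BMO = ‖f‖_BMO + |f_{Q₀}|`. -/
def bmoNorm (f : Rd d → ℝ) : ℝ := bmoSeminorm f + |avg (Q0 d) f|

/-- The side length `ℓ̃` of the smallest axis-parallel cube `Q̃` containing `Q` and `Q₀`. -/
def tildeLen (Q : Cube d) : ℝ :=
  ⨆ i : Fin d, (max (Q.c i + Q.len / 2) (1 / 2) - min (Q.c i - Q.len / 2) (-(1 / 2)))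

/-- The log-distance function `L(Q) = log max(ℓ̃/ℓ, ℓ̃) + 1`. -/
def Lfun (Q : Cube d) : ℝ := Real.log (max (tildeLen Q / Q.len) (tildeLen Q)) + 1

/-- The `LMO` seminorm `sup_Q L(Q)·‖f‖_Q`. -/
def lmoSeminorm (f : Rd d → ℝ) : ℝ := ⨆ Q : Cube d, Lfun Q * osc Q f

/-- Membership in `LMO(ℝ^d)`. -/
def MemLMO (f : Rd d → ℝ) : Prop :=
  LocallyIntegrable f volume ∧ BddAbove (Set.range fun Q : Cube d => Lfun Q * osc Q f)

/-- A Calderón–Zygmund kernel on `ℝ^d` with regularity exponent `δ ∈ (0,1]`. -/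
structure CZKernel (d : ℕ) where
  K : Rd d → Rd d → ℝ
  C : ℝ
  δ : ℝ
  δ_pos : 0 < δ
  δ_le_one : δ ≤ 1
  meas : Measurable (Function.uncurry K)
  size : ∀ x y : Rd d, x ≠ y → |K x y| ≤ C * ‖x - y‖ ^ (-(d : ℝ))
  regularity : ∀ x₁ x₂ y : Rd d, x₁ ≠ y → 2 * ‖x₁ - x₂‖ ≤ ‖x₁ - y‖ →
    |K x₁ y - K x₂ y| ≤ C * ‖x₁ - x₂‖ ^ δ / ‖x₁ - y‖ ^ ((d : ℝ) + δ)

/-- A Calderón–Zygmund operator: a bounded linear operator on `L²(ℝ^d)` associated to a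
Calderón–Zygmund kernel, i.e. represented by integration against the kernel a.e. outside
the support of compactly supported `L²` functions. -/
structure CZOperator (d : ℕ) extends CZKernel d where
  T : Lp ℝ 2 (volume : Measure (Rd d)) →L[ℝ] Lp ℝ 2 (volume : Measure (Rd d))
  repr : ∀ f : Lp ℝ 2 (volume : Measure (Rd d)),
    HasCompactSupport (f : Rd d → ℝ) →
    ∀ᵐ x : Rd d, x ∉ tsupport (f : Rd d → ℝ) → (T f : Rd d → ℝ) x = ∫ y, K x y * f y

open Classical in
/-- The local part `∫_{2Q} K(x,y) g(y) dy` of `T_Q g`, interpreted in the `L²` sense: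
`T` applied to `g·χ_{2Q}` (and junk value `0` if `g·χ_{2Q} ∉ L²`). -/
def TQloc (S : CZOperator d) (Q : Cube d) (g : Rd d → ℝ) : Rd d → ℝ :=
  fun x =>
    if h : MemLp (Q.double.set.indicator g) 2 (volume : Measure (Rd d)) then
      (S.T (MemLp.toLp _ h) : Rd d → ℝ) x
    else 0

/-- The tail part `∫_{ℝ^d∖2Q} (K(x,y)-K(c,y)) g(y) dy` of `T_Q g`. -/
def TQtail (S : CZOperator d) (Q : Cube d) (g : Rd d → ℝ) : Rd d → ℝ :=
  fun x => ∫ y in (Q.double.set)ᶜ, (S.K x y - S.K Q.c y) * g y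

/-- `T_Q g (x) = ∫_{2Q} K(x,y)g(y)dy + ∫_{ℝ^d∖2Q}(K(x,y)-K(c,y))g(y)dy` for `x ∈ Q`. -/
def TQ (S : CZOperator d) (Q : Cube d) (g : Rd d → ℝ) : Rd d → ℝ :=
  fun x => TQloc S Q g x + TQtail S Q g x

/-- `T_Q 1`, where `1` is the constant function `χ_{ℝ^d}`. -/
def Tone (S : CZOperator d) (Q : Cube d) : Rd d → ℝ := TQ S Q (fun _ => 1)

/-- For `f ∈ BMO`, `T_Q f = f_{2Q}·T_Q1 + T_Q(f - f_{2Q})`. -/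
def TQbmo (S : CZOperator d) (Q : Cube d) (f : Rd d → ℝ) : Rd d → ℝ :=
  fun x => avg Q.double f * Tone S Q x + TQ S Q (fun y => f y - avg Q.double f) x

/-- The seminorm `‖Tf‖_BMO = sup_Q ‖T_Q f‖_Q` for `f ∈ BMO`. -/
def TbmoSeminorm (S : CZOperator d) (f : Rd d → ℝ) : ℝ :=
  ⨆ Q : Cube d, osc Q (TQbmo S Q f)

/-- The function `log|x|`. -/
def logAbs : Rd d → ℝ := fun x => Real.log ‖x‖

/-- The function `log_{s,-s}(x) = log|x-s| - log|x+s|`. -/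
def logss (s : Rd d) : Rd d → ℝ := fun x => Real.log ‖x - s‖ - Real.log ‖x + s‖

end TL

/-!
The average of `log |x|` is log-homogeneous: averaging over `r • Q` gives `log r` plus the
average over `Q`, and `log (max |c| ℓ)` scales the same way, so it suffices to treat unit cubes.
A unit cube lies in the ball of radius `√d / 2` around its center. If `|c| > √d`, then
`|x - c| ≤ |c| / 2` on `Q`, so `log |x|` stays within `log 2` of `log |c|`. Otherwise `Q` lies in
the fixed ball of radius `2√d`, on which `log |x|` is integrable (it is dominated by
`2 |x|^(-1/2) + |x|`), while `0 ≤ log (max |c| 1) ≤ log √d`.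
-/

theorem Real.abs_log_le_two_mul_rpow_neg_half_add {t : ℝ} (ht : 0 ≤ t) :
    |Real.log t| ≤ 2 * t ^ (-(1 / 2 : ℝ)) + t := by
  have hpow : 0 ≤ 2 * t ^ (-(1 / 2 : ℝ)) := by positivity
  have hneg : -Real.log t ≤ 2 * t ^ (-(1 / 2 : ℝ)) := by
    rw [← Real.log_inv, Real.rpow_neg ht, ← Real.inv_rpow ht]
    linarith [Real.log_le_rpow_div (inv_nonneg.2 ht) (one_half_pos (α := ℝ))]
  rw [abs_le]
  constructor <;> linarith [Real.log_le_self ht]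

theorem locallyIntegrable_log_norm {E : Type*} [NormedAddCommGroup E] [NormedSpace ℝ E]
    [FiniteDimensional ℝ E] [MeasurableSpace E] [BorelSpace E] {μ : Measure E}
    [μ.IsAddHaarMeasure] (hE : 1 ≤ Module.finrank ℝ E) :
    LocallyIntegrable (fun x : E ↦ Real.log ‖x‖) μ := by
  have hsing : LocallyIntegrable (fun x : E ↦ 2 * ‖x‖ ^ (-(1 / 2 : ℝ))) μ := by
    refine locallyIntegrable_of_norm_le_rpow hE (C := 2) (α := 1 / 2) ?_ ?_ ?_
    · have : (1 : ℝ) ≤ Module.finrank ℝ E := by exact_mod_cast hE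
      linarith
    · refine ae_of_all _ fun x ↦ ?_
      rw [Real.norm_of_nonneg (by positivity)]
    · exact ((measurable_norm.pow_const _).const_mul 2).aestronglyMeasurable
  refine (hsing.add continuous_norm.locallyIntegrable).mono
    (Real.measurable_log.comp measurable_norm).aestronglyMeasurable (ae_of_all _ fun x ↦ ?_)
  rw [Real.norm_eq_abs, Pi.add_apply, Real.norm_of_nonneg (by positivity)]
  exact Real.abs_log_le_two_mul_rpow_neg_half_add (norm_nonneg x)

theorem abs_log_norm_sub_log_norm_le {E : Type*} [SeminormedAddCommGroup E] {x y : E}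
    (h : 2 * ‖x - y‖ ≤ ‖y‖) : |Real.log ‖x‖ - Real.log ‖y‖| ≤ Real.log 2 := by
  rcases (norm_nonneg y).eq_or_lt with hy | hy
  · have hx : ‖x‖ = 0 := by
      linarith [norm_nonneg x, norm_le_norm_add_norm_sub' x y, norm_nonneg (x - y)]
    simp [hx, ← hy, Real.log_nonneg one_le_two]
  have hlow : ‖y‖ / 2 ≤ ‖x‖ := by linarith [norm_sub_norm_le y x, norm_sub_rev x y]
  have hup : ‖x‖ ≤ 2 * ‖y‖ := by linarith [norm_sub_norm_le x y]
  have hx : 0 < ‖x‖ := by linarith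
  rw [← Real.log_div hx.ne' hy.ne', abs_le]
  constructor
  · rw [neg_le, ← Real.log_inv, inv_div]
    exact Real.log_le_log (by positivity) (by rw [div_le_iff₀ hx]; linarith)
  · exact Real.log_le_log (by positivity) (by rw [div_le_iff₀ hy]; linarith)

namespace TL

open Metric Pointwise

namespace Cube

variable (Q : Cube d)

theorem volume_set : volume Q.set = ENNReal.ofReal Q.vol := by
  have hset : Q.set = (MeasurableEquiv.toLp 2 (Fin d → ℝ)).symm ⁻¹'
      Set.univ.pi fun i ↦ Ioo (Q.c i - Q.len / 2) (Q.c i + Q.len / 2) := by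
    ext x
    simp [Cube.set, abs_lt, sub_lt_iff_lt_add', lt_sub_iff_add_lt, and_comm]
  rw [hset, (EuclideanSpace.volume_preserving_symm_measurableEquiv_toLp (Fin d)).measure_preimage
    (MeasurableSet.univ_pi fun _ ↦ measurableSet_Ioo).nullMeasurableSet, volume_pi_pi]
  simp [Real.volume_Ioo, vol, ENNReal.ofReal_pow Q.len_pos.le]

theorem measureReal_set : volume.real Q.set = Q.vol := by
  rw [measureReal_def, volume_set]
  exact ENNReal.toReal_ofReal (pow_nonneg Q.len_pos.le d)

theorem volume_set_lt_top : volume Q.set < ⊤ := by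
  rw [volume_set]
  exact ENNReal.ofReal_lt_top

theorem norm_sub_c_le {x : Rd d} (hx : x ∈ Q.set) : ‖x - Q.c‖ ≤ Real.sqrt d * Q.len / 2 := by
  rw [EuclideanSpace.norm_eq, mul_div_assoc,
    ← Real.sqrt_sq (by linarith [Q.len_pos] : 0 ≤ Q.len / 2), ← Real.sqrt_mul (Nat.cast_nonneg d)]
  refine Real.sqrt_le_sqrt ?_
  calc ∑ i, ‖(x - Q.c) i‖ ^ 2 ≤ ∑ _i : Fin d, (Q.len / 2) ^ 2 :=
        Finset.sum_le_sum fun i _ ↦ pow_le_pow_left₀ (norm_nonneg _) (hx i).le 2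
    _ = d * (Q.len / 2) ^ 2 := by simp

theorem set_subset_closedBall : Q.set ⊆ closedBall Q.c (Real.sqrt d * Q.len / 2) :=
  fun _ hx ↦ mem_closedBall_iff_norm.2 (Q.norm_sub_c_le hx)

def smul (r : ℝ) (hr : 0 < r) : Cube d := ⟨r • Q.c, r * Q.len, mul_pos hr Q.len_pos⟩

theorem smul_set {r : ℝ} (hr : 0 < r) : (Q.smul r hr).set = r • Q.set := by
  ext x
  simp only [smul, Cube.set, Set.mem_ofPred_eq, mem_smul_set_iff_inv_smul_mem₀ hr.ne',
    PiLp.smul_apply, smul_eq_mul]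
  refine forall_congr' fun i ↦ ?_
  rw [show x i - r * Q.c i = r * (r⁻¹ * x i - Q.c i) by field_simp, abs_mul, abs_of_pos hr,
    mul_div_assoc, mul_lt_mul_iff_right₀ hr]

end Cube

section Average

variable (Q : Cube d)

theorem avg_smul (f : Rd d → ℝ) {r : ℝ} (hr : 0 < r) :
    avg (Q.smul r hr) f = avg Q fun x ↦ f (r • x) := by
  have h := Measure.setIntegral_comp_smul_of_pos volume f Q.set hr
  rw [finrank_euclideanSpace_fin] at h
  rw [avg, avg, Cube.smul_set, h, smul_eq_mul]
  simp only [Cube.vol, Cube.smul, mul_pow, mul_inv]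
  ring

theorem avg_const_add {f : Rd d → ℝ} (hf : IntegrableOn f Q.set) (a : ℝ) :
    avg Q (fun x ↦ a + f x) = a + avg Q f := by
  have hvol : Q.vol ≠ 0 := pow_ne_zero d Q.len_pos.ne'
  rw [avg, avg, integral_add (f := fun _ ↦ a) (integrableOn_const Q.volume_set_lt_top.ne) hf,
    setIntegral_const, Q.measureReal_set, smul_eq_mul]
  field_simp

theorem abs_avg_le (f : Rd d → ℝ) : |avg Q f| ≤ (Q.vol)⁻¹ * ∫ x in Q.set, |f x| := by
  have hvol : 0 ≤ (Q.vol)⁻¹ := inv_nonneg.2 (pow_nonneg Q.len_pos.le d)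
  rw [avg, abs_mul, abs_of_nonneg hvol]
  exact mul_le_mul_of_nonneg_left abs_integral_le_integral_abs hvol

theorem abs_avg_le_of_forall_abs_le {f : Rd d → ℝ} {M : ℝ} (h : ∀ x ∈ Q.set, |f x| ≤ M) :
    |avg Q f| ≤ M := by
  have hvol : 0 < Q.vol := pow_pos Q.len_pos d
  have hint := norm_setIntegral_le_of_norm_le_const Q.volume_set_lt_top
    fun x hx ↦ (Real.norm_eq_abs (f x)).trans_le (h x hx)
  rw [Q.measureReal_set, Real.norm_eq_abs] at hint
  rw [avg, abs_mul, abs_of_pos (inv_pos.2 hvol), inv_mul_le_iff₀ hvol, mul_comm]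
  exact hint

theorem abs_avg_sub_le {f : Rd d → ℝ} (hf : IntegrableOn f Q.set) {a M : ℝ}
    (h : ∀ x ∈ Q.set, |f x - a| ≤ M) : |avg Q f - a| ≤ M := by
  rw [sub_eq_neg_add, ← avg_const_add Q hf]
  exact abs_avg_le_of_forall_abs_le Q fun x hx ↦ by simpa [neg_add_eq_sub] using h x hx

end Average

theorem locallyIntegrable_logAbs (hd : 0 < d) : LocallyIntegrable (logAbs (d := d)) volume :=
  locallyIntegrable_log_norm (by rwa [finrank_euclideanSpace_fin])

theorem integrableOn_logAbs (hd : 0 < d) (Q : Cube d) : IntegrableOn logAbs Q.set :=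
  ((locallyIntegrable_logAbs hd).integrableOn_isCompact (isCompact_closedBall _ _)).mono_set
    Q.set_subset_closedBall

theorem avg_logAbs_smul (hd : 0 < d) (Q : Cube d) {r : ℝ} (hr : 0 < r) :
    avg (Q.smul r hr) logAbs = Real.log r + avg Q logAbs := by
  have : Nonempty (Fin d) := ⟨⟨0, hd⟩⟩
  rw [avg_smul, ← avg_const_add Q (integrableOn_logAbs hd Q), avg, avg]
  congr 1
  refine integral_congr_ae (ae_restrict_of_ae ?_)
  filter_upwards [Measure.ae_ne volume 0] with x hx
  rw [logAbs, logAbs, norm_smul, Real.norm_of_nonneg hr.le,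
    Real.log_mul hr.ne' (norm_ne_zero_iff.2 hx)]

theorem exists_abs_avg_logAbs_sub_log_max_norm_one_le (hd : 0 < d) :
    ∃ C, ∀ c : Rd d, |avg ⟨c, 1, one_pos⟩ logAbs - Real.log (max ‖c‖ 1)| ≤ C := by
  set K := Real.sqrt d
  have hK : 1 ≤ K := Real.one_le_sqrt.2 (by exact_mod_cast hd)
  set M := ∫ x in closedBall (0 : Rd d) (2 * K), |logAbs x|
  refine ⟨max (M + Real.log K) (Real.log 2), fun c ↦ ?_⟩
  set Q : Cube d := ⟨c, 1, one_pos⟩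
  have hQ : ∀ x ∈ Q.set, ‖x - c‖ ≤ K / 2 := fun x hx ↦ by simpa [Q] using Q.norm_sub_c_le hx
  rcases le_or_gt ‖c‖ K with hc | hc
  · have hsub : Q.set ⊆ closedBall 0 (2 * K) := fun x hx ↦
      mem_closedBall_zero_iff.2 (by linarith [norm_le_norm_add_norm_sub' x c, hQ x hx])
    have havg : |avg Q logAbs| ≤ M :=
      calc |avg Q logAbs| ≤ (Q.vol)⁻¹ * ∫ x in Q.set, |logAbs x| := abs_avg_le Q logAbs
        _ = ∫ x in Q.set, |logAbs x| := by simp [Q, Cube.vol]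
        _ ≤ M := setIntegral_mono_set
          ((locallyIntegrable_logAbs hd).integrableOn_isCompact (isCompact_closedBall _ _)).abs
          (ae_of_all _ fun _ ↦ abs_nonneg _) hsub.eventuallyLE
    have hlog_nonneg : 0 ≤ Real.log (max ‖c‖ 1) := Real.log_nonneg (le_max_right _ _)
    have hlog_le : Real.log (max ‖c‖ 1) ≤ Real.log K :=
      Real.log_le_log (by positivity) (max_le hc hK)
    refine le_max_of_le_left ?_
    rw [abs_le] at havg ⊢
    constructor <;> linarith
  · rw [max_eq_left (hK.trans hc.le)]
    refine le_max_of_le_right (abs_avg_sub_le Q (integrableOn_logAbs hd Q) fun x hx ↦ ?_)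
    exact abs_log_norm_sub_log_norm_le (by linarith [hQ x hx])

/-- There is a dimensional constant `C` such that for every cube `Q = Q(c,ℓ)` in `ℝ^d`,
the average `log_Q` of `log|x|` over `Q` satisfies `|log_Q - log max(|c|, ℓ)| ≤ C`. -/
theorem statement_9 {d : ℕ} (hd : 0 < d) :
    ∃ C : ℝ, ∀ Q : Cube d, |avg Q logAbs - Real.log (max ‖Q.c‖ Q.len)| ≤ C := by
  obtain ⟨C, hC⟩ := exists_abs_avg_logAbs_sub_log_max_norm_one_le hd
  refine ⟨C, fun Q ↦ ?_⟩
  have hℓ := Q.len_pos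
  set Q₁ : Cube d := ⟨Q.len⁻¹ • Q.c, 1, one_pos⟩
  have hQ : Q₁.smul Q.len hℓ = Q := by
    simp [Q₁, Cube.smul, smul_smul, hℓ.ne']
  have havg : avg Q logAbs = Real.log Q.len + avg Q₁ logAbs := by
    rw [← avg_logAbs_smul hd Q₁ hℓ, hQ]
  have hmax : max ‖Q.c‖ Q.len = Q.len * max ‖Q₁.c‖ 1 := by
    rw [mul_max_of_nonneg _ _ hℓ.le, norm_smul, Real.norm_of_nonneg (inv_nonneg.2 hℓ.le),
      mul_inv_cancel_left₀ hℓ.ne', mul_one]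
  rw [havg, hmax, Real.log_mul hℓ.ne' (by positivity), add_sub_add_left_eq_sub]
  exact hC _

end TL
end
end

section
/- Fix δ ∈ (0,1] and dimension d. There is a constant C such that for every cube Q in R^d, the sum over s ≥ 1 of 1/(2^{sδ}·L(2^{s+1}Q)) is at most C/L(Q). -/
open MeasureTheory Filter Set

noncomputable section

namespace TL

variable {d : ℕ}

/-!
Dilating `Q` by `r ≥ 1` multiplies `ℓ` by `r` and does not decrease `ℓ̃`, so
`log max(ℓ̃/ℓ, ℓ̃)` drops by at most `log r`; since `L ≥ 1` this gives
`L(Q) ≤ (1 + log r) L(rQ)`. For `r = 2^{s+2}` the `s`-th term is therefore at most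
`(s + 3) 2^{-(s+1)δ} / L(Q)`, and these coefficients are summable.
-/

lemma side_le_tildeLen (Q : Cube d) (i : Fin d) :
    max (Q.c i + Q.len / 2) (1 / 2) - min (Q.c i - Q.len / 2) (-(1 / 2)) ≤ tildeLen Q :=
  le_ciSup (f := fun i : Fin d =>
    max (Q.c i + Q.len / 2) (1 / 2) - min (Q.c i - Q.len / 2) (-(1 / 2)))
    (Set.finite_range _).bddAbove i

lemma one_le_tildeLen (hd : 0 < d) (Q : Cube d) : 1 ≤ tildeLen Q := by
  have hside := side_le_tildeLen Q ⟨0, hd⟩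
  have hmax := le_max_right (Q.c ⟨0, hd⟩ + Q.len / 2) (1 / 2)
  have hmin := min_le_right (Q.c ⟨0, hd⟩ - Q.len / 2) (-(1 / 2))
  linarith

lemma one_le_Lfun (hd : 0 < d) (Q : Cube d) : 1 ≤ Lfun Q := by
  have hlog : 0 ≤ Real.log (max (tildeLen Q / Q.len) (tildeLen Q)) :=
    Real.log_nonneg ((one_le_tildeLen hd Q).trans (le_max_right _ _))
  unfold Lfun
  linarith

lemma tildeLen_le_tildeLen_dilate (Q : Cube d) {r : ℝ} (hr : 1 ≤ r) :
    tildeLen Q ≤ tildeLen (Q.dilate r (zero_lt_one.trans_le hr)) := by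
  refine ciSup_mono (Set.finite_range _).bddAbove fun i => ?_
  have hlen : Q.len ≤ r * Q.len := le_mul_of_one_le_left Q.len_pos.le hr
  show _ ≤ max (Q.c i + r * Q.len / 2) (1 / 2) - min (Q.c i - r * Q.len / 2) (-(1 / 2))
  gcongr

lemma Lfun_le_Lfun_dilate_add_log (hd : 0 < d) (Q : Cube d) {r : ℝ} (hr : 1 ≤ r) :
    Lfun Q ≤ Lfun (Q.dilate r (zero_lt_one.trans_le hr)) + Real.log r := by
  set Q' := Q.dilate r (zero_lt_one.trans_le hr)
  have hr0 : 0 < r := zero_lt_one.trans_le hr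
  have ht : tildeLen Q ≤ tildeLen Q' := tildeLen_le_tildeLen_dilate Q hr
  have ht1 : 1 ≤ tildeLen Q := one_le_tildeLen hd Q
  have hM_pos : 0 < max (tildeLen Q / Q.len) (tildeLen Q) :=
    zero_lt_one.trans_le (ht1.trans (le_max_right _ _))
  have hM'_pos : 0 < max (tildeLen Q' / Q'.len) (tildeLen Q') :=
    zero_lt_one.trans_le ((ht1.trans ht).trans (le_max_right _ _))
  have hM : max (tildeLen Q / Q.len) (tildeLen Q) ≤
      r * max (tildeLen Q' / Q'.len) (tildeLen Q') := by
    have hlen : Q'.len = r * Q.len := rfl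
    have hdiv : r * (tildeLen Q' / (r * Q.len)) = tildeLen Q' / Q.len := by
      field_simp
    rw [mul_max_of_nonneg _ _ hr0.le, hlen, hdiv]
    exact max_le_max (by gcongr; exact Q.len_pos.le)
      (ht.trans (le_mul_of_one_le_left (zero_le_one.trans (ht1.trans ht)) hr))
  have hlog := Real.log_le_log hM_pos hM
  rw [Real.log_mul hr0.ne' hM'_pos.ne'] at hlog
  unfold Lfun
  linarith

lemma Lfun_le_one_add_log_mul_Lfun_dilate (hd : 0 < d) (Q : Cube d) {r : ℝ} (hr : 1 ≤ r) :
    Lfun Q ≤ (1 + Real.log r) * Lfun (Q.dilate r (zero_lt_one.trans_le hr)) := by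
  have hL := Lfun_le_Lfun_dilate_add_log hd Q hr
  have hL1 := one_le_Lfun hd (Q.dilate r (zero_lt_one.trans_le hr))
  have hlog := Real.log_nonneg hr
  nlinarith

lemma one_add_log_two_pow_le (n : ℕ) : 1 + Real.log ((2 : ℝ) ^ n) ≤ n + 1 := by
  have hlog2 : Real.log 2 ≤ 1 := by
    have := Real.log_le_sub_one_of_pos (two_pos : (0 : ℝ) < 2); linarith
  rw [Real.log_pow]
  nlinarith [(n.cast_nonneg : (0 : ℝ) ≤ n)]

lemma summable_add_div_rpow_mul {b δ : ℝ} (hb : 1 < b) (hδ : 0 < δ) (a : ℝ) :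
    Summable fun s : ℕ => ((s : ℝ) + a) / b ^ (((s : ℝ) + 1) * δ) := by
  set q : ℝ := (b ^ δ)⁻¹
  have hq0 : 0 ≤ q := by positivity
  have hq1 : q < 1 := inv_lt_one_of_one_lt₀ (Real.one_lt_rpow hb hδ)
  have hterm : ∀ s : ℕ, ((s : ℝ) + a) / b ^ (((s : ℝ) + 1) * δ) =
      q * ((s : ℝ) * q ^ s) + (a * q) * q ^ s := by
    intro s
    rw [show ((s : ℝ) + 1) * δ = δ * ((s + 1 : ℕ) : ℝ) by push_cast; ring,
      Real.rpow_mul_natCast (zero_le_one.trans hb.le), div_eq_mul_inv, ← inv_pow]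
    ring
  have hlin : Summable fun s : ℕ => (s : ℝ) * q ^ s := by
    simpa using summable_pow_mul_geometric_of_norm_lt_one 1
      (by rwa [Real.norm_eq_abs, abs_of_nonneg hq0])
  simpa only [hterm] using
    (hlin.mul_left q).add ((summable_geometric_of_lt_one hq0 hq1).mul_left (a * q))

lemma one_div_mul_Lfun_dilate_two_pow_le (hd : 0 < d) (Q : Cube d) {P : ℝ} (hP : 0 < P)
    (s : ℕ) :
    1 / (P * Lfun (Q.dilate ((2 : ℝ) ^ (s + 2)) (by positivity))) ≤
      ((s : ℝ) + 3) / P / Lfun Q := by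
  have hLQ := one_le_Lfun hd Q
  have hL' := one_le_Lfun hd (Q.dilate ((2 : ℝ) ^ (s + 2)) (by positivity))
  have hlog := one_add_log_two_pow_le (s + 2)
  push_cast at hlog
  have hL : Lfun Q ≤ ((s : ℝ) + 3) * Lfun (Q.dilate ((2 : ℝ) ^ (s + 2)) (by positivity)) :=
    (Lfun_le_one_add_log_mul_Lfun_dilate hd Q (one_le_pow₀ one_le_two)).trans
      (mul_le_mul_of_nonneg_right (by linarith) (by linarith))
  rw [div_div, div_le_div_iff₀ (by positivity) (by positivity)]
  nlinarith [mul_le_mul_of_nonneg_left hL hP.le]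

/-- For fixed `δ ∈ (0,1]` there is a constant `C` such that for every cube `Q` in `ℝ^d`,
`∑_{s≥1} 1/(2^{sδ} L(2^{s+1}Q)) ≤ C / L(Q)`. -/
theorem statement_16 {d : ℕ} (hd : 0 < d) (δ : ℝ) (hδ : 0 < δ) :
    ∃ C : ℝ, ∀ Q : Cube d,
      (∑' s : ℕ, 1 / ((2 : ℝ) ^ (((s : ℝ) + 1) * δ)
          * Lfun (Q.dilate ((2 : ℝ) ^ (s + 2)) (by positivity)))) ≤ C / Lfun Q := by
  refine ⟨∑' s : ℕ, ((s : ℝ) + 3) / 2 ^ (((s : ℝ) + 1) * δ), fun Q => ?_⟩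
  have hsum := (summable_add_div_rpow_mul one_lt_two hδ 3).div_const (Lfun Q)
  have hterm := fun s : ℕ =>
    one_div_mul_Lfun_dilate_two_pow_le hd Q (Real.rpow_pos_of_pos two_pos (((s : ℝ) + 1) * δ)) s
  have hnonneg : ∀ s : ℕ, 0 ≤ 1 / ((2 : ℝ) ^ (((s : ℝ) + 1) * δ)
      * Lfun (Q.dilate ((2 : ℝ) ^ (s + 2)) (by positivity))) := fun s => by
    have := one_le_Lfun hd (Q.dilate ((2 : ℝ) ^ (s + 2)) (by positivity))
    positivity
  rw [← tsum_div_const]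
  exact (hsum.of_nonneg_of_le hnonneg hterm).tsum_le_tsum hterm hsum

end TL
end
end
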